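/- For every natural number k, the rank of the matrix multiplication map for 2^k × 2^k matrices over ℂ satisfies R(M_{2^k,2^k,2^k}) ≤ 7^k. -/

import Mathlib

/-!
Strassen's identity writes the product of two `2 × 2` matrices over an arbitrary, possibly
noncommutative, ring as a linear combination of seven products of linear combinations of their
entries. Applied to `Matrix (Fin 2) (Fin 2) S` with `S` the algebra of `2^k × 2^k` matrices, it
turns a bilinear computation of length `r` for `S` into one of length `7 r` for `2^(k+1) × 2^(k+1)`
matrices, since `Matrix (Fin 2) (Fin 2) S` and these are isomorphic as `ℂ`-algebras.
-/

open scoped BigOperators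

/-- A bilinear map `f : A × B → C` over `ℂ` has rank at most `r` if it admits a bilinear
computation of length `r`. -/
def HasRankLE {A B C : Type*} [AddCommGroup A] [Module ℂ A] [AddCommGroup B] [Module ℂ B]
    [AddCommGroup C] [Module ℂ C] (f : A → B → C) (r : ℕ) : Prop :=
  ∃ (α : Fin r → (A →ₗ[ℂ] ℂ)) (β : Fin r → (B →ₗ[ℂ] ℂ)) (c : Fin r → C),
    ∀ a b, f a b = ∑ i, (α i a * β i b) • c i

open Matrix

section

variable {A B C A' B' C' : Type*} [AddCommGroup A] [Module ℂ A] [AddCommGroup B] [Module ℂ B]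
  [AddCommGroup C] [Module ℂ C] [AddCommGroup A'] [Module ℂ A'] [AddCommGroup B'] [Module ℂ B']
  [AddCommGroup C'] [Module ℂ C']

theorem HasRankLE.of_eq_sum_comp {r s : ℕ} {g : A → B → C} (hg : HasRankLE g r)
    (P : Fin s → A' →ₗ[ℂ] A) (Q : Fin s → B' →ₗ[ℂ] B) (L : Fin s → C →ₗ[ℂ] C')
    {f : A' → B' → C'} (hf : ∀ a b, f a b = ∑ j, L j (g (P j a) (Q j b))) :
    HasRankLE f (s * r) := by
  obtain ⟨α, β, c, hg⟩ := hg
  let e : Fin s × Fin r ≃ Fin (s * r) := finProdFinEquiv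
  refine ⟨fun k => α (e.symm k).2 ∘ₗ P (e.symm k).1, fun k => β (e.symm k).2 ∘ₗ Q (e.symm k).1,
    fun k => L (e.symm k).1 (c (e.symm k).2), fun a b => ?_⟩
  rw [hf, ← e.sum_comp, Fintype.sum_prod_type]
  simp [hg, map_sum, map_smul]

end

theorem HasRankLE.mul_of_algEquiv {S T : Type*} [Ring S] [Algebra ℂ S] [Ring T] [Algebra ℂ T]
    {r : ℕ} (e : S ≃ₐ[ℂ] T) (h : HasRankLE (fun a b : S => a * b) r) :
    HasRankLE (fun a b : T => a * b) r := by
  obtain ⟨α, β, c, h⟩ := h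
  refine ⟨fun i => α i ∘ₗ e.symm.toLinearMap, fun i => β i ∘ₗ e.symm.toLinearMap,
    fun i => e (c i), fun a b => ?_⟩
  calc a * b = e (e.symm a * e.symm b) := by simp
    _ = _ := by simp [h, map_sum, map_smul]

theorem hasRankLE_mul_of_unique {n : Type*} [Unique n] [Fintype n] :
    HasRankLE (fun A B : Matrix n n ℂ => A * B) 1 :=
  ⟨fun _ => entryLinearMap ℂ ℂ default default, fun _ => entryLinearMap ℂ ℂ default default,
    fun _ => of fun _ _ => 1, fun A B => by
    ext i j
    rw [Unique.eq_default i, Unique.eq_default j]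
    simp [mul_apply]⟩

section Strassen

variable (R : Type*) {S : Type*} [Semiring R] [Ring S] [Module R S]

local notation "π" => entryLinearMap R S
local notation "ι" => singleLinearMap R

def strassenLeft : Fin 7 → Matrix (Fin 2) (Fin 2) S →ₗ[R] S :=
  ![π 0 0 + π 1 1, π 1 0 + π 1 1, π 0 0, π 1 1, π 0 0 + π 0 1, π 1 0 - π 0 0, π 0 1 - π 1 1]

def strassenRight : Fin 7 → Matrix (Fin 2) (Fin 2) S →ₗ[R] S :=
  ![π 0 0 + π 1 1, π 0 0, π 0 1 - π 1 1, π 1 0 - π 0 0, π 1 1, π 0 0 + π 0 1, π 1 0 + π 1 1]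

def strassenOut : Fin 7 → S →ₗ[R] Matrix (Fin 2) (Fin 2) S :=
  ![ι 0 0 + ι 1 1, ι 1 0 - ι 1 1, ι 0 1 + ι 1 1, ι 0 0 + ι 1 0, ι 0 1 - ι 0 0, ι 1 1, ι 0 0]

theorem mul_eq_sum_strassen (A B : Matrix (Fin 2) (Fin 2) S) :
    A * B = ∑ j, strassenOut R j (strassenLeft R j A * strassenRight R j B) := by
  ext i k
  fin_cases i <;> fin_cases k <;>
    simp [strassenLeft, strassenRight, strassenOut, mul_apply, Fin.sum_univ_seven] <;>
    noncomm_ring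

end Strassen

theorem HasRankLE.matrix_fin_two_mul {S : Type*} [Ring S] [Module ℂ S] {r : ℕ}
    (h : HasRankLE (fun a b : S => a * b) r) :
    HasRankLE (fun A B : Matrix (Fin 2) (Fin 2) S => A * B) (7 * r) :=
  h.of_eq_sum_comp (strassenLeft ℂ) (strassenRight ℂ) (strassenOut ℂ) (mul_eq_sum_strassen ℂ)

/-- Recursive Strassen: the rank of `2^k × 2^k` matrix multiplication over ℂ is
at most `7^k`. -/
theorem rank_matMul_pow_two_le :
    ∀ k : ℕ, HasRankLE (fun (A B : Matrix (Fin (2 ^ k)) (Fin (2 ^ k)) ℂ) => A * B) (7 ^ k) := by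
  intro k
  induction k with
  | zero => exact hasRankLE_mul_of_unique (n := Fin 1)
  | succ k ih =>
    let e : Fin 2 × Fin (2 ^ k) ≃ Fin (2 ^ (k + 1)) :=
      finProdFinEquiv.trans (finCongr (pow_succ' 2 k).symm)
    rw [pow_succ' 7]
    exact ih.matrix_fin_two_mul.mul_of_algEquiv
      ((compAlgEquiv (Fin 2) (Fin (2 ^ k)) ℂ ℂ).trans (reindexAlgEquiv ℂ ℂ e))
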